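/- If A is an ECTA with maximal constant cmax and θ ∈ L(A), then the untimed word Untime(θ) is accepted by the existential region automaton RA(∃, Reg_d, A) built from the refined (Bouyer-style) regions; i.e., Untime(L(A)) ⊆ L(RA(∃,Reg_d,A)). Moreover, since the refined regions refine the Alur–Dill regions, L(RA(∃,Reg_d,A)) ⊆ L(RA(∃,Reg,A)). -/

import Mathlib

/-- Event clocks over alphabet `α`: a history clock and a prophecy clock per letter. -/
inductive Clock (α : Type) where
  | hist (a : α)
  | proph (a : α)
deriving DecidableEq

/-- A valuation assigns to each event clock a real value or `⊥` (here `none`). -/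
def Val (α : Type) := Clock α → Option ℝ

/-- All defined clock values are nonnegative. -/
def Nonneg {α : Type} (v : Val α) : Prop := ∀ x r, v x = some r → 0 ≤ r

/-- `v[x := d]`. -/
def Val.set {α : Type} [DecidableEq α] (v : Val α) (x : Clock α) (d : Option ℝ) : Val α :=
  fun y => if y = x then d else v y

/-- Time elapse: history clocks increase, prophecy clocks decrease; `⊥` unaffected. -/
def elapse {α : Type} (v : Val α) (t : ℝ) : Val α := fun c =>
  match c with
  | .hist a => (v (.hist a)).map (· + t)
  | .proph a => (v (.proph a)).map (· - t)

/-- Time elapse by `t` is allowed: `t ≥ 0` and all prophecy clocks are at least `t`. -/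
def CanElapse {α : Type} (v : Val α) (t : ℝ) : Prop :=
  0 ≤ t ∧ ∀ a r, v (.proph a) = some r → t ≤ r

def InitialVal {α : Type} (v : Val α) : Prop := ∀ a, v (.hist a) = none

def FinalVal {α : Type} (v : Val α) : Prop := ∀ a, v (.proph a) = none

/-- Clock constraints: Boolean combinations of atomic constraints `x ∼ c`. -/
inductive Constr (α : Type) where
  | tt
  | lt (x : Clock α) (c : ℕ)
  | gt (x : Clock α) (c : ℕ)
  | eq (x : Clock α) (c : ℕ)
  | not (ψ : Constr α)
  | and (ψ₁ ψ₂ : Constr α)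

def Constr.sat {α : Type} (v : Val α) : Constr α → Prop
  | .tt => True
  | .lt x c => ∃ r, v x = some r ∧ r < (c : ℝ)
  | .gt x c => ∃ r, v x = some r ∧ (c : ℝ) < r
  | .eq x c => v x = some (c : ℝ)
  | .not ψ => ¬ Constr.sat v ψ
  | .and ψ₁ ψ₂ => Constr.sat v ψ₁ ∧ Constr.sat v ψ₂

/-- An event-clock automaton. -/
structure ECTA (α Q : Type) where
  init : Q
  edges : Set (Q × α × Constr α × Q)
  accept : Set Q

/-- Discrete step on letter `σ`: there is a nonnegative valuation `v̄` with
`v̄[→σ := 0] = v`, `v̄[←σ := 0] = v'` and `v̄ ⊨ ψ` for some edge `(q,σ,ψ,q')`. -/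
def DStep {α Q : Type} [DecidableEq α] (A : ECTA α Q) (q : Q) (v : Val α) (σ : α)
    (q' : Q) (v' : Val α) : Prop :=
  ∃ ψ, (q, σ, ψ, q') ∈ A.edges ∧
    ∃ vb : Val α, Nonneg vb ∧
      vb.set (.proph σ) (some 0) = v ∧
      vb.set (.hist σ) (some 0) = v' ∧
      Constr.sat vb ψ

/-- Combined step: elapse `t`, then fire a `σ`-edge. -/
def TStep {α Q : Type} [DecidableEq α] (A : ECTA α Q) (q : Q) (v : Val α) (t : ℝ) (σ : α)
    (q' : Q) (v' : Val α) : Prop :=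
  CanElapse v t ∧ DStep A q (elapse v t) σ q' v'

/-- Acceptance of a timed word (given by successive delays) from state `(q,v)`. -/
inductive ECAcc {α Q : Type} [DecidableEq α] (A : ECTA α Q) : Q → Val α → List (ℝ × α) → Prop where
  | nil : ∀ q v, q ∈ A.accept → FinalVal v → ECAcc A q v []
  | cons : ∀ q v t σ q' v' w, TStep A q v t σ q' v' → ECAcc A q' v' w → ECAcc A q v ((t, σ) :: w)

/-- `Untime(L(A,(q,v)))`. -/
def UntimedLangFrom {α Q : Type} [DecidableEq α] (A : ECTA α Q) (q : Q) (v : Val α) :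
    Set (List α) :=
  { w | ∃ θ : List (ℝ × α), ECAcc A q v θ ∧ θ.map Prod.snd = w }

/-- The timed language of `A` (initialized runs). -/
def TLang {α Q : Type} [DecidableEq α] (A : ECTA α Q) : Set (List (ℝ × α)) :=
  { θ | ∃ v, Nonneg v ∧ InitialVal v ∧ ECAcc A A.init v θ }

/-- `Untime(L(A))`. -/
def UntimedLang {α Q : Type} [DecidableEq α] (A : ECTA α Q) : Set (List α) :=
  { w | ∃ v, Nonneg v ∧ InitialVal v ∧ w ∈ UntimedLangFrom A A.init v }
/-- Distance to the relevant integer boundary: `⌈r⌉ − r` for history clocks,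
`r − ⌊r⌋` for prophecy clocks. -/
noncomputable def fracDist {α : Type} : Clock α → ℝ → ℝ
  | .hist _, r => (⌈r⌉ : ℝ) - r
  | .proph _, r => r - (⌊r⌋ : ℝ)

/-- Signed value used for diagonal constraints: prophecy clocks are negated. -/
def sval {α : Type} : Clock α → ℝ → ℝ
  | .hist _, r => r
  | .proph _, r => -r

/-- The Alur–Dill region equivalence with maximal constant `cmax`. -/
def RegEq {α : Type} (cmax : ℕ) (v₁ v₂ : Val α) : Prop :=
  (∀ x, v₁ x = none ↔ v₂ x = none) ∧
  (∀ x r₁ r₂, v₁ x = some r₁ → v₂ x = some r₂ →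
      (((cmax : ℝ) < r₁ ∧ (cmax : ℝ) < r₂) ∨ (⌈r₁⌉ = ⌈r₂⌉ ∧ ⌊r₁⌋ = ⌊r₂⌋))) ∧
  (∀ x y rx₁ ry₁ rx₂ ry₂, v₁ x = some rx₁ → v₁ y = some ry₁ →
      v₂ x = some rx₂ → v₂ y = some ry₂ → rx₁ ≤ (cmax : ℝ) → ry₁ ≤ (cmax : ℝ) →
      (fracDist x rx₁ ≤ fracDist y ry₁ ↔ fracDist x rx₂ ≤ fracDist y ry₂))

/-- The refined (Bouyer-style) region equivalence. -/
def RegEqD {α : Type} (cmax : ℕ) (v₁ v₂ : Val α) : Prop :=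
  RegEq cmax v₁ v₂ ∧
  (∀ x y rx₁ ry₁ rx₂ ry₂, v₁ x = some rx₁ → v₁ y = some ry₁ →
      v₂ x = some rx₂ → v₂ y = some ry₂ →
      ((cmax : ℝ) < rx₁ ∨ (cmax : ℝ) < ry₁) →
      ((2 * (cmax : ℝ) < |sval x rx₁ - sval y ry₁| ∧ 2 * (cmax : ℝ) < |sval x rx₂ - sval y ry₂|) ∨
       (⌊sval x rx₁ - sval y ry₁⌋ = ⌊sval x rx₂ - sval y ry₂⌋ ∧
        ⌈sval x rx₁ - sval y ry₁⌉ = ⌈sval x rx₂ - sval y ry₂⌉)))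

/-- A region of an equivalence `E`: an equivalence class of nonnegative valuations. -/
def IsRegionOf {α : Type} (E : Val α → Val α → Prop) (r : Set (Val α)) : Prop :=
  ∃ v, Nonneg v ∧ r = { v' | Nonneg v' ∧ E v v' }

def InitialRegion {α : Type} (r : Set (Val α)) : Prop := ∀ v ∈ r, InitialVal v
def FinalRegion {α : Type} (r : Set (Val α)) : Prop := ∀ v ∈ r, FinalVal v

/-- Acceptance in the universal region automaton `RA(∀,E,A)`. -/
inductive UAcc {α Q : Type} [DecidableEq α] (A : ECTA α Q) (E : Val α → Val α → Prop) :
    Q → Set (Val α) → List α → Prop where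
  | nil : ∀ q r, q ∈ A.accept → IsRegionOf E r → FinalRegion r → UAcc A E q r []
  | cons : ∀ q r σ q' r' w, IsRegionOf E r → IsRegionOf E r' →
      (∀ v ∈ r, ∃ t v', v' ∈ r' ∧ TStep A q v t σ q' v') →
      UAcc A E q' r' w → UAcc A E q r (σ :: w)

/-- Acceptance in the existential region automaton `RA(∃,E,A)`. -/
inductive EAcc {α Q : Type} [DecidableEq α] (A : ECTA α Q) (E : Val α → Val α → Prop) :
    Q → Set (Val α) → List α → Prop where
  | nil : ∀ q r, q ∈ A.accept → IsRegionOf E r → FinalRegion r → EAcc A E q r []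
  | cons : ∀ q r σ q' r' w, IsRegionOf E r → IsRegionOf E r' →
      (∃ v ∈ r, ∃ t v', v' ∈ r' ∧ TStep A q v t σ q' v') →
      EAcc A E q' r' w → EAcc A E q r (σ :: w)

/-- The language of the universal region automaton. -/
def ULang {α Q : Type} [DecidableEq α] (A : ECTA α Q) (E : Val α → Val α → Prop) :
    Set (List α) :=
  { w | ∃ r, IsRegionOf E r ∧ InitialRegion r ∧ UAcc A E A.init r w }

/-- The language of the existential region automaton. -/
def ELang {α Q : Type} [DecidableEq α] (A : ECTA α Q) (E : Val α → Val α → Prop) :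
    Set (List α) :=
  { w | ∃ r, IsRegionOf E r ∧ InitialRegion r ∧ EAcc A E A.init r w }

/-- All constants in a constraint are at most `k`. -/
def Constr.BoundedBy {α : Type} (k : ℕ) : Constr α → Prop
  | .tt => True
  | .lt _ c => c ≤ k
  | .gt _ c => c ≤ k
  | .eq _ c => c ≤ k
  | .not ψ => Constr.BoundedBy k ψ
  | .and ψ₁ ψ₂ => Constr.BoundedBy k ψ₁ ∧ Constr.BoundedBy k ψ₂

/-- `cmax` bounds all constants appearing in the guards of `A`. -/
def MaxConstLe {α Q : Type} (A : ECTA α Q) (k : ℕ) : Prop :=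
  ∀ e ∈ A.edges, Constr.BoundedBy k e.2.2.1

/-!
A run of `A` visits valuations `v₀, v₁, …`; the existential region automaton follows it through
the regions of the `vᵢ`, each concrete step witnessing the existential edge between consecutive
regions. A refined region lies in the Alur–Dill region with the same representative, so the same
witnesses carry an accepting run of `RA(∃,Reg_d,A)` over to `RA(∃,Reg,A)`.
-/

section Regions

variable {α : Type}

def regionOf (E : Val α → Val α → Prop) (v : Val α) : Set (Val α) :=
  { v' | Nonneg v' ∧ E v v' }

theorem isRegionOf_regionOf {E : Val α → Val α → Prop} {v : Val α} (hv : Nonneg v) :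
    IsRegionOf E (regionOf E v) :=
  ⟨v, hv, rfl⟩

theorem mem_regionOf_self {E : Val α → Val α → Prop} (hE : ∀ v, E v v) {v : Val α}
    (hv : Nonneg v) : v ∈ regionOf E v :=
  ⟨hv, hE v⟩

theorem regionOf_mono {E₁ E₂ : Val α → Val α → Prop} (hle : ∀ v v', E₁ v v' → E₂ v v')
    (v : Val α) : regionOf E₁ v ⊆ regionOf E₂ v :=
  fun _ hu => ⟨hu.1, hle _ _ hu.2⟩

theorem initialRegion_regionOf {E : Val α → Val α → Prop}
    (hE : ∀ v v', E v v' → InitialVal v → InitialVal v') {v : Val α} (hv : InitialVal v) :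
    InitialRegion (regionOf E v) :=
  fun _ hu => hE _ _ hu.2 hv

theorem finalRegion_regionOf {E : Val α → Val α → Prop}
    (hE : ∀ v v', E v v' → FinalVal v → FinalVal v') {v : Val α} (hv : FinalVal v) :
    FinalRegion (regionOf E v) :=
  fun _ hu => hE _ _ hu.2 hv

theorem RegEq.refl (cmax : ℕ) (v : Val α) : RegEq cmax v v := by
  refine ⟨fun _ => Iff.rfl, fun x r₁ r₂ h₁ h₂ => ?_,
    fun x y rx₁ ry₁ rx₂ ry₂ hx₁ hy₁ hx₂ hy₂ _ _ => ?_⟩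
  · obtain rfl : r₁ = r₂ := Option.some.inj (h₁.symm.trans h₂)
    exact Or.inr ⟨rfl, rfl⟩
  · obtain rfl : rx₁ = rx₂ := Option.some.inj (hx₁.symm.trans hx₂)
    obtain rfl : ry₁ = ry₂ := Option.some.inj (hy₁.symm.trans hy₂)
    rfl

theorem RegEqD.refl (cmax : ℕ) (v : Val α) : RegEqD cmax v v := by
  refine ⟨RegEq.refl cmax v, fun x y rx₁ ry₁ rx₂ ry₂ hx₁ hy₁ hx₂ hy₂ _ => ?_⟩
  obtain rfl : rx₁ = rx₂ := Option.some.inj (hx₁.symm.trans hx₂)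
  obtain rfl : ry₁ = ry₂ := Option.some.inj (hy₁.symm.trans hy₂)
  exact Or.inr ⟨rfl, rfl⟩

theorem RegEq.initialVal {cmax : ℕ} {v v' : Val α} (h : RegEq cmax v v')
    (hv : InitialVal v) : InitialVal v' :=
  fun a => (h.1 (.hist a)).mp (hv a)

theorem RegEq.finalVal_iff {cmax : ℕ} {v v' : Val α} (h : RegEq cmax v v') :
    FinalVal v ↔ FinalVal v' :=
  forall_congr' fun a => h.1 (.proph a)

end Regions

section Runs

variable {α Q : Type} [DecidableEq α] {A : ECTA α Q}

theorem DStep.nonneg {q q' : Q} {v v' : Val α} {σ : α} (h : DStep A q v σ q' v') :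
    Nonneg v' := by
  obtain ⟨_, _, vb, hvb, _, rfl, _⟩ := h
  intro x r hx
  by_cases hx' : x = .hist σ
  · simp only [Val.set, hx', if_true, Option.some.injEq] at hx
    exact hx ▸ le_rfl
  · simp only [Val.set, hx', if_false] at hx
    exact hvb x r hx

theorem ECAcc.eAcc_regionOf {E : Val α → Val α → Prop} (hrefl : ∀ v, E v v)
    (hfinal : ∀ v v', E v v' → FinalVal v → FinalVal v') {q : Q} {v : Val α}
    {θ : List (ℝ × α)} (h : ECAcc A q v θ) (hv : Nonneg v) :
    EAcc A E q (regionOf E v) (θ.map Prod.snd) := by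
  induction h with
  | nil q v hq hfin =>
    exact .nil q _ hq (isRegionOf_regionOf hv) (finalRegion_regionOf hfinal hfin)
  | cons q v t σ q' v' w hstep _ ih =>
    have hv' : Nonneg v' := hstep.2.nonneg
    exact .cons q _ σ q' _ _ (isRegionOf_regionOf hv) (isRegionOf_regionOf hv')
      ⟨v, mem_regionOf_self hrefl hv, t, v', mem_regionOf_self hrefl hv', hstep⟩ (ih hv')

theorem EAcc.of_le {E₁ E₂ : Val α → Val α → Prop} (hle : ∀ v v', E₁ v v' → E₂ v v')
    (hrefl : ∀ v, E₁ v v) (hfinal : ∀ v v', E₂ v v' → (FinalVal v ↔ FinalVal v'))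
    {q : Q} {r : Set (Val α)} {w : List α} (h : EAcc A E₁ q r w) {r₂ : Set (Val α)}
    (hr₂ : IsRegionOf E₂ r₂) (hsub : r ⊆ r₂) : EAcc A E₂ q r₂ w := by
  induction h generalizing r₂ with
  | nil q _ hq hr hfin =>
    obtain ⟨v, hv, rfl⟩ := hr
    obtain ⟨v₂, hv₂, rfl⟩ := hr₂
    have hmem := mem_regionOf_self hrefl hv
    have hfin₂ : FinalVal v₂ := (hfinal _ _ (hsub hmem).2).mpr (hfin v hmem)
    exact .nil q _ hq (isRegionOf_regionOf hv₂)
      (finalRegion_regionOf (fun _ _ h => (hfinal _ _ h).mp) hfin₂)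
  | cons q _ σ q' _ w _ hr' hedge _ ih =>
    obtain ⟨v', hv', rfl⟩ := hr'
    obtain ⟨u, hu, t, u', hu', hstep⟩ := hedge
    have hsub' := regionOf_mono hle v'
    exact .cons q r₂ σ q' _ w hr₂ (isRegionOf_regionOf hv')
      ⟨u, hsub hu, t, u', hsub' hu', hstep⟩ (ih (isRegionOf_regionOf hv') hsub')

end Runs

theorem untimed_lang_subset_existential_refined_region_lang_general
    {α Q : Type} [DecidableEq α] (A : ECTA α Q) (cmax : ℕ) :
    UntimedLang A ⊆ ELang A (RegEqD cmax) ∧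
    ELang A (RegEqD cmax) ⊆ ELang A (RegEq cmax) := by
  constructor
  · rintro _ ⟨v, hv, hinit, θ, hθ, rfl⟩
    exact ⟨regionOf _ v, isRegionOf_regionOf hv,
      initialRegion_regionOf (fun _ _ h => h.1.initialVal) hinit,
      hθ.eAcc_regionOf (RegEqD.refl cmax) (fun _ _ h => h.1.finalVal_iff.mp) hv⟩
  · rintro w ⟨_, ⟨v, hv, rfl⟩, hinit, hacc⟩
    have hvinit : InitialVal v := hinit v (mem_regionOf_self (RegEqD.refl cmax) hv)
    exact ⟨regionOf _ v, isRegionOf_regionOf hv,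
      initialRegion_regionOf (fun _ _ h => h.initialVal) hvinit,
      hacc.of_le (fun _ _ h => h.1) (RegEqD.refl cmax) (fun _ _ h => h.finalVal_iff)
        (isRegionOf_regionOf hv) (regionOf_mono (fun _ _ h => h.1) v)⟩

/-- `Untime(L(A)) ⊆ L(RA(∃,Reg_d,A))` and, since refined regions refine the
Alur–Dill regions, `L(RA(∃,Reg_d,A)) ⊆ L(RA(∃,Reg,A))`. -/
theorem untimed_lang_subset_existential_refined_region_lang
    {α Q : Type} [DecidableEq α] (A : ECTA α Q) (cmax : ℕ)
    (hmax : MaxConstLe A cmax) :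
    UntimedLang A ⊆ ELang A (RegEqD cmax) ∧
    ELang A (RegEqD cmax) ⊆ ELang A (RegEq cmax) :=
  untimed_lang_subset_existential_refined_region_lang_general A cmax
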